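/- Let x₀ ∈ (0,1) be the unique solution of ψ(x₀) = μ. Then 𝒢(x₀) − (x₀ − μ)·G(x₀) + ∫_{θ**(x₀)}^{x₀} ((1−F(x₀))/f(θ))·g(ψ(θ,x₀)) dθ > 0; in particular, already 𝒢(x₀) − (x₀ − μ)·G(x₀) = μ·G(x₀) − ∫₀^{x₀} ω g(ω) dω > 0. -/

import Mathlib

open MeasureTheory

/-- `F(x) = ∫₀^x f`, with the convention that it is `0` for `x ≤ 0`. -/
noncomputable def cdf (f : ℝ → ℝ) (x : ℝ) : ℝ := ∫ t in Set.Ioc (0:ℝ) x, f t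

/-- `𝒢(x) = ∫₀^x G(y) dy`, the left-hand integral of the cdf of `g`. -/
noncomputable def calG (g : ℝ → ℝ) (x : ℝ) : ℝ := ∫ y in Set.Ioc (0:ℝ) x, cdf g y

/-- `μ = ∫₀¹ ω g(ω) dω`, the mean cost. -/
noncomputable def muG (g : ℝ → ℝ) : ℝ := ∫ t in Set.Ioc (0:ℝ) 1, t * g t

/-- The virtual valuation `ψ(θ) = θ − (1 − F(θ))/f(θ)`. -/
noncomputable def psi (f : ℝ → ℝ) (θ : ℝ) : ℝ := θ - (1 - cdf f θ) / f θ

/-- The truncated virtual valuation `ψ(θ,x) = θ − (F(x) − F(θ))/f(θ)`. -/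
noncomputable def psiT (f : ℝ → ℝ) (x θ : ℝ) : ℝ := θ - (cdf f x - cdf f θ) / f θ

/-!
Integration by parts turns `𝒢(x₀) = ∫₀^{x₀} G` into `x₀ G(x₀) − ∫₀^{x₀} ω g(ω) dω`, which is the
identity. Since `G(1) = 1`, the right-hand side is `G(x₀)` times the difference between `μ` and
the mean of `g` on `[0, x₀]`; that conditional mean is at most `x₀`, while the mean of `g` on
`[x₀, 1]` exceeds `x₀`, so it lies strictly below `μ`. Finally the extra integral is nonnegative:
`F(x₀) ≤ 1`, and monotonicity of `ψ(·, x₀)` with `ψ(θ**, x₀) = 0`, `ψ(x₀, x₀) = x₀` keeps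
`ψ(θ, x₀)` in `[0, x₀]`, where `g > 0`.
-/

open Set intervalIntegral

lemma cdf_eq_intervalIntegral (f : ℝ → ℝ) {x : ℝ} (hx : 0 ≤ x) :
    cdf f x = ∫ t in (0:ℝ)..x, f t :=
  (integral_of_le hx).symm

lemma calG_eq_intervalIntegral (g : ℝ → ℝ) {x : ℝ} (hx : 0 ≤ x) :
    calG g x = ∫ y in (0:ℝ)..x, ∫ t in (0:ℝ)..y, g t := by
  rw [integral_of_le hx]
  exact setIntegral_congr_fun measurableSet_Ioc fun y hy => cdf_eq_intervalIntegral g hy.1.le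

lemma cdf_le_cdf {f : ℝ → ℝ} {x y : ℝ} (hxy : x ≤ y) (hf : IntegrableOn f (Ioc 0 y))
    (hf_nonneg : ∀ t ∈ Ioc 0 y, 0 ≤ f t) : cdf f x ≤ cdf f y :=
  setIntegral_mono_set hf ((ae_restrict_iff' measurableSet_Ioc).2 (ae_of_all _ hf_nonneg))
    (Ioc_subset_Ioc_right hxy).eventuallyLE

theorem integral_primitive_eq {g : ℝ → ℝ} {a b : ℝ} (hab : a ≤ b)
    (hg : ContinuousOn g (Icc a b)) :
    ∫ y in a..b, (∫ t in a..y, g t) = b * (∫ t in a..b, g t) - ∫ t in a..b, t * g t := by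
  have hg' : IntervalIntegrable g volume a b := hg.intervalIntegrable_of_Icc hab
  have hprim : ∀ y ∈ Ioo (min a b) (max a b), HasDerivAt (fun u => ∫ t in a..u, g t) (g y) y := by
    rw [min_eq_left hab, max_eq_right hab]
    intro y hy
    have hy' : y ∈ uIcc a b := by rw [uIcc_of_le hab]; exact Ioo_subset_Icc_self hy
    exact integral_hasDerivAt_right (hg'.mono_set (uIcc_subset_uIcc_left hy'))
      ((hg.mono Ioo_subset_Icc_self).stronglyMeasurableAtFilter isOpen_Ioo y hy)
      (hg.continuousAt (Icc_mem_nhds hy.1 hy.2))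
  have h := integral_mul_deriv_eq_deriv_mul_of_hasDerivAt
    (continuousOn_primitive_interval' hg' left_mem_uIcc)
    continuousOn_id hprim (fun y _ => hasDerivAt_id y) hg' intervalIntegrable_const
  simp only [mul_one, integral_same, zero_mul, sub_zero, id] at h
  rw [h, mul_comm b]
  simp only [mul_comm (g _)]

theorem integral_mul_mul_integral_lt {g : ℝ → ℝ} {a x b : ℝ} (hax : a < x) (hxb : x < b)
    (hg : IntervalIntegrable g volume a b) (hg_pos : ∀ t ∈ Ioo a b, 0 < g t) :
    (∫ t in a..x, t * g t) * (∫ t in a..b, g t) < (∫ t in a..b, t * g t) * ∫ t in a..x, g t := by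
  have hx : x ∈ uIcc a b := by rw [uIcc_of_le (hax.trans hxb).le]; exact ⟨hax.le, hxb.le⟩
  have hg_left := hg.mono_set (uIcc_subset_uIcc_left hx)
  have hg_right := hg.mono_set (uIcc_subset_uIcc_right hx)
  have hm_left : IntervalIntegrable (fun t => t * g t) volume a x :=
    hg_left.continuousOn_mul continuousOn_id
  have hm_right : IntervalIntegrable (fun t => t * g t) volume x b :=
    hg_right.continuousOn_mul continuousOn_id
  have hmass_pos : 0 < ∫ t in a..x, g t :=
    intervalIntegral_pos_of_pos_on hg_left (fun t ht => hg_pos t ⟨ht.1, ht.2.trans hxb⟩) hax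
  have hmass_nonneg : 0 ≤ ∫ t in x..b, g t :=
    (intervalIntegral_pos_of_pos_on hg_right
      (fun t ht => hg_pos t ⟨hax.trans ht.1, ht.2⟩) hxb).le
  have hmoment_left : ∫ t in a..x, t * g t ≤ x * ∫ t in a..x, g t := by
    rw [← intervalIntegral.integral_const_mul]
    exact integral_mono_on_of_le_Ioo hax.le hm_left (hg_left.const_mul x)
      fun t ht => mul_le_mul_of_nonneg_right ht.2.le (hg_pos t ⟨ht.1, ht.2.trans hxb⟩).le
  have hmoment_right : x * ∫ t in x..b, g t < ∫ t in x..b, t * g t := by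
    have hdiff := hm_right.sub (hg_right.const_mul x)
    rw [← sub_pos, ← intervalIntegral.integral_const_mul, ← integral_sub hm_right
      (hg_right.const_mul x)]
    refine intervalIntegral_pos_of_pos_on hdiff (fun t ht => ?_) hxb
    nlinarith [hg_pos t ⟨hax.trans ht.1, ht.2⟩, ht.1]
  rw [← integral_add_adjacent_intervals hg_left hg_right,
    ← integral_add_adjacent_intervals hm_left hm_right]
  nlinarith [mul_le_mul_of_nonneg_right hmoment_left hmass_nonneg,
    mul_lt_mul_of_pos_right hmoment_right hmass_pos]

lemma psiT_self (f : ℝ → ℝ) (x : ℝ) : psiT f x x = x := by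
  simp [psiT]

lemma psiT_mem_Icc {f : ℝ → ℝ} {x θ₀ θ : ℝ} (hmono : MonotoneOn (psiT f x) (Icc 0 x))
    (hθ₀ : θ₀ ∈ Icc 0 x) (hψθ₀ : psiT f x θ₀ = 0) (hθ : θ ∈ Icc θ₀ x) :
    psiT f x θ ∈ Icc 0 x := by
  have hθ' : θ ∈ Icc 0 x := ⟨hθ₀.1.trans hθ.1, hθ.2⟩
  constructor
  · exact hψθ₀ ▸ hmono hθ₀ hθ' hθ.1
  · exact (hmono hθ' (right_mem_Icc.2 (hθ₀.1.trans hθ₀.2)) hθ.2).trans_eq (psiT_self f x)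

lemma integral_div_mul_comp_psiT_nonneg {f g : ℝ → ℝ} {x θ₀ c : ℝ} (hc : 0 ≤ c)
    (hmono : MonotoneOn (psiT f x) (Icc 0 x)) (hθ₀ : θ₀ ∈ Icc 0 x) (hψθ₀ : psiT f x θ₀ = 0)
    (hf : ∀ t ∈ Icc 0 x, 0 ≤ f t) (hg : ∀ t ∈ Icc 0 x, 0 ≤ g t) :
    0 ≤ ∫ θ in θ₀..x, (c / f θ) * g (psiT f x θ) :=
  integral_nonneg hθ₀.2 fun θ hθ =>
    mul_nonneg (div_nonneg hc (hf θ ⟨hθ₀.1.trans hθ.1, hθ.2⟩))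
      (hg _ (psiT_mem_Icc hmono hθ₀ hψθ₀ hθ))

theorem stmt11_general
    (f g : ℝ → ℝ)
    (hf_int : IntegrableOn f (Set.Icc 0 1))
    (hg_int : IntegrableOn g (Set.Icc 0 1))
    (hf_one : cdf f 1 = 1)
    (hg_one : cdf g 1 = 1)
    (hf_pos : ∀ t ∈ Set.Icc (0:ℝ) 1, 0 < f t)
    (hg_cont : ContinuousOn g (Set.Icc 0 1))
    (hg_pos : ∀ t ∈ Set.Icc (0:ℝ) 1, 0 < g t)
    (hpsiT_mono : ∀ x ∈ Set.Ioc (0:ℝ) 1,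
      StrictMonoOn (psiT f x) (Set.Icc 0 x) ∧ ContinuousOn (psiT f x) (Set.Icc 0 x))
    (x₀ : ℝ) (hx₀ : x₀ ∈ Set.Ioo (0:ℝ) 1)
    (θss : ℝ) (hθss : θss ∈ Set.Ioo 0 x₀) (hθss0 : psiT f x₀ θss = 0) :
    0 < calG g x₀ - (x₀ - muG g) * cdf g x₀ +
        (∫ θ in θss..x₀, ((1 - cdf f x₀) / f θ) * g (psiT f x₀ θ)) ∧
    calG g x₀ - (x₀ - muG g) * cdf g x₀ =
      muG g * cdf g x₀ - (∫ ω in (0:ℝ)..x₀, ω * g ω) ∧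
    0 < muG g * cdf g x₀ - ∫ ω in (0:ℝ)..x₀, ω * g ω := by
  obtain ⟨hx0, hx1⟩ := hx₀
  have hIcc : Icc 0 x₀ ⊆ Icc (0:ℝ) 1 := Icc_subset_Icc_right hx1.le
  have hmean : muG g = ∫ t in (0:ℝ)..1, t * g t := (integral_of_le zero_le_one).symm
  have hmass : ∫ t in (0:ℝ)..1, g t = 1 := by rw [← cdf_eq_intervalIntegral g zero_le_one, hg_one]
  have hparts : calG g x₀ = x₀ * cdf g x₀ - ∫ ω in (0:ℝ)..x₀, ω * g ω := by
    rw [calG_eq_intervalIntegral g hx0.le, cdf_eq_intervalIntegral g hx0.le,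
      integral_primitive_eq hx0.le (hg_cont.mono hIcc)]
  have hgap : 0 < muG g * cdf g x₀ - ∫ ω in (0:ℝ)..x₀, ω * g ω := by
    have h := integral_mul_mul_integral_lt hx0 hx1
      (hg_int.mono_set (uIcc_of_le (zero_le_one' ℝ)).le).intervalIntegrable
      fun t ht => hg_pos t (Ioo_subset_Icc_self ht)
    rw [hmass, mul_one, ← hmean, ← cdf_eq_intervalIntegral g hx0.le] at h
    linarith
  have hF : cdf f x₀ ≤ 1 := hf_one ▸ cdf_le_cdf hx1.le (hf_int.mono_set Ioc_subset_Icc_self)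
    fun t ht => (hf_pos t (Ioc_subset_Icc_self ht)).le
  have hterm_nonneg := integral_div_mul_comp_psiT_nonneg (sub_nonneg.2 hF)
    (hpsiT_mono x₀ ⟨hx0, hx1.le⟩).1.monotoneOn ⟨hθss.1.le, hθss.2.le⟩ hθss0
    (fun t ht => (hf_pos t (hIcc ht)).le) (fun t ht => (hg_pos t (hIcc ht)).le)
  exact ⟨by linarith, by rw [hparts]; ring, hgap⟩

/-- at the unique solution `x₀ ∈ (0,1)` of `ψ(x₀) = μ`,
`𝒢(x₀) − (x₀−μ)·G(x₀) + ∫_{θ**(x₀)}^{x₀} ((1−F(x₀))/f(θ))·g(ψ(θ,x₀)) dθ > 0`;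
in particular already `𝒢(x₀) − (x₀−μ)·G(x₀) = μ·G(x₀) − ∫₀^{x₀} ω g(ω) dω > 0`. -/
theorem stmt11
    (f g : ℝ → ℝ)
    (hf_int : IntegrableOn f (Set.Icc 0 1))
    (hg_int : IntegrableOn g (Set.Icc 0 1))
    (hf_ae : ∀ᵐ t, t ∈ Set.Icc (0:ℝ) 1 → 0 < f t)
    (hg_ae : ∀ᵐ t, t ∈ Set.Icc (0:ℝ) 1 → 0 < g t)
    (hf_one : cdf f 1 = 1)
    (hg_one : cdf g 1 = 1)
    (hf_cont : ContinuousOn f (Set.Icc 0 1))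
    (hf_pos : ∀ t ∈ Set.Icc (0:ℝ) 1, 0 < f t)
    (hg_cont : ContinuousOn g (Set.Icc 0 1))
    (hg_pos : ∀ t ∈ Set.Icc (0:ℝ) 1, 0 < g t)
    (hpsi_mono : StrictMonoOn (psi f) (Set.Icc 0 1))
    (hpsiT_mono : ∀ x ∈ Set.Ioc (0:ℝ) 1,
      StrictMonoOn (psiT f x) (Set.Icc 0 x) ∧ ContinuousOn (psiT f x) (Set.Icc 0 x))
    (x₀ : ℝ) (hx₀ : x₀ ∈ Set.Ioo (0:ℝ) 1) (hx₀psi : psi f x₀ = muG g)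
    (θss : ℝ) (hθss : θss ∈ Set.Ioo 0 x₀) (hθss0 : psiT f x₀ θss = 0) :
    0 < calG g x₀ - (x₀ - muG g) * cdf g x₀ +
        (∫ θ in θss..x₀, ((1 - cdf f x₀) / f θ) * g (psiT f x₀ θ)) ∧
    calG g x₀ - (x₀ - muG g) * cdf g x₀ =
      muG g * cdf g x₀ - (∫ ω in (0:ℝ)..x₀, ω * g ω) ∧
    0 < muG g * cdf g x₀ - ∫ ω in (0:ℝ)..x₀, ω * g ω :=
  stmt11_general f g hf_int hg_int hf_one hg_one hf_pos hg_cont hg_pos hpsiT_mono x₀ hx₀ θss hθss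
    hθss0
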